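/- arXiv:1303.6651 — 13 statements merged into one kernel-verified Lean document; each statement's English description precedes it below -/
import Mathlib

section
/- Let n ≥ 2 be an integer and A an s×s matrix with nonnegative real entries. Then s^(n-1) · tr(A^n) ≥ (tr A)^n. -/
lemma pow_entry_nonneg {s : ℕ} (A : Matrix (Fin s) (Fin s) ℝ)
    (hA : ∀ i j, 0 ≤ A i j) : ∀ k i j, 0 ≤ (A ^ k) i j := by
  intro k
  induction k with
  | zero => intro i j; simp [Matrix.one_apply]; positivity
  | succ k ih =>
    intro i j
    rw [pow_succ, Matrix.mul_apply]
    exact Finset.sum_nonneg fun l _ => mul_nonneg (ih i l) (hA l j)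

lemma diag_pow_le {s : ℕ} (A : Matrix (Fin s) (Fin s) ℝ)
    (hA : ∀ i j, 0 ≤ A i j) : ∀ k i, (A i i) ^ k ≤ (A ^ k) i i := by
  intro k
  induction k with
  | zero => intro i; simp [Matrix.one_apply]
  | succ k ih =>
    intro i
    rw [pow_succ, pow_succ, Matrix.mul_apply]
    calc A i i ^ k * A i i ≤ (A ^ k) i i * A i i :=
          mul_le_mul_of_nonneg_right (ih i) (hA i i)
      _ ≤ ∑ j, (A ^ k) i j * A j i := by
          refine Finset.single_le_sum (f := fun j => (A ^ k) i j * A j i)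
            (fun j _ => mul_nonneg (pow_entry_nonneg A hA k i j) (hA j i))
            (Finset.mem_univ i)

/-- Trace inequality for nonnegative matrices: for an `s × s` matrix `A` with
nonnegative real entries and `n ≥ 2`, `s^(n-1) * tr(A^n) ≥ (tr A)^n`. -/
theorem trace_pow_inequality (s n : ℕ) (hs : 2 ≤ s) (hn : 2 ≤ n)
    (A : Matrix (Fin s) (Fin s) ℝ) (hA : ∀ i j, 0 ≤ A i j) :
    (A.trace) ^ n ≤ (s : ℝ) ^ (n - 1) * (A ^ n).trace := by
  have hs0 : (0:ℝ) < (s:ℝ) ^ (n-1) := by positivity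
  have h1 : A.trace ^ n ≤ (s : ℝ) ^ (n - 1) * ∑ i, (A i i) ^ n := by
    have := pow_sum_div_card_le_sum_pow (s := (Finset.univ : Finset (Fin s)))
      (f := fun i => A i i) (fun i _ => hA i i) (n - 1)
    rw [Finset.card_univ, Fintype.card_fin,
      Nat.sub_add_cancel (le_trans (by norm_num) hn), div_le_iff₀ hs0] at this
    simpa [Matrix.trace, Matrix.diag, mul_comm] using this
  refine h1.trans ?_
  refine mul_le_mul_of_nonneg_left ?_ hs0.le
  unfold Matrix.trace
  exact Finset.sum_le_sum fun i _ => diag_pow_le A hA n i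
end

section
/- Let A be an s×s matrix with nonnegative real entries. If s · tr(A²) = (tr A)², then all diagonal entries of A are equal (a_{k,k} = a_{1,1} for all k) and a_{i,j}·a_{j,i} = 0 for all i ≠ j. -/
lemma sum_sq_diff_eq (s : ℕ) (f : Fin s → ℝ) :
    ∑ i, ∑ j, (f i - f j) ^ 2
      = 2 * ((s : ℝ) * ∑ i, f i ^ 2 - (∑ i, f i) ^ 2) := by
  have h : ∀ i : Fin s, ∑ j, (f i - f j) ^ 2
      = (s : ℝ) * f i ^ 2 - 2 * f i * (∑ j, f j) + ∑ j, f j ^ 2 := by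
    intro i
    simp only [sub_sq]
    rw [Finset.sum_add_distrib, Finset.sum_sub_distrib, Finset.sum_const,
      Finset.card_univ, Fintype.card_fin, ← Finset.mul_sum]
    ring
  rw [Finset.sum_congr rfl (fun i _ => h i)]
  rw [Finset.sum_add_distrib, Finset.sum_sub_distrib, ← Finset.mul_sum,
    Finset.sum_const, Finset.card_univ, Fintype.card_fin]
  have : ∑ i, 2 * f i * (∑ j, f j) = 2 * (∑ i, f i) * (∑ j, f j) := by
    rw [← Finset.sum_mul, ← Finset.mul_sum]
  rw [this]
  ring

/-- Equality case of the trace inequality for `n = 2`: if `A` is an `s × s`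
nonnegative matrix with `s * tr(A²) = (tr A)²`, then all diagonal entries of
`A` are equal and `A i j * A j i = 0` for all `i ≠ j`. -/
theorem trace_sq_eq_case (s : ℕ) (hs : 2 ≤ s)
    (A : Matrix (Fin s) (Fin s) ℝ) (hA : ∀ i j, 0 ≤ A i j)
    (heq : (s : ℝ) * (A ^ 2).trace = (A.trace) ^ 2) :
    (∀ i j, A i i = A j j) ∧ (∀ i j, i ≠ j → A i j * A j i = 0) := by
  set Q : ℝ := ∑ i, A i i ^ 2 with hQ
  set T : ℝ := ∑ i, A i i with hT
  set S : ℝ := ∑ i, ∑ j ∈ Finset.univ.erase i, A i j * A j i with hS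
  have htrA : A.trace = T := rfl
  have htr2 : (A ^ 2).trace = Q + S := by
    rw [pow_two, Matrix.trace]
    have : ∀ i : Fin s, (A * A).diag i = A i i ^ 2 + ∑ j ∈ Finset.univ.erase i, A i j * A j i := by
      intro i
      rw [Matrix.diag_apply, Matrix.mul_apply,
        ← Finset.add_sum_erase _ _ (Finset.mem_univ i)]
      ring_nf
    rw [Finset.sum_congr rfl (fun i _ => this i), Finset.sum_add_distrib]
  have hSnn : 0 ≤ S := by
    apply Finset.sum_nonneg; intro i _
    exact Finset.sum_nonneg fun j _ => mul_nonneg (hA i j) (hA j i)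
  have hD : ∑ i, ∑ j, (A i i - A j j) ^ 2 = 2 * ((s : ℝ) * Q - T ^ 2) :=
    sum_sq_diff_eq s (fun i => A i i)
  have hDnn : (0:ℝ) ≤ ∑ i, ∑ j, (A i i - A j j) ^ 2 :=
    Finset.sum_nonneg fun i _ => Finset.sum_nonneg fun j _ => sq_nonneg _
  have heq' : (s : ℝ) * Q + (s : ℝ) * S = T ^ 2 := by
    rw [htrA, htr2] at heq; linarith
  have hspos : (0:ℝ) < s := by positivity
  have hS0 : S = 0 := by nlinarith
  have hD0 : ∑ i, ∑ j, (A i i - A j j) ^ 2 = 0 := by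
    rw [hD]; nlinarith
  constructor
  · intro i j
    have h1 := (Finset.sum_eq_zero_iff_of_nonneg
      (fun i _ => Finset.sum_nonneg fun j _ => sq_nonneg (A i i - A j j))).mp hD0
      i (Finset.mem_univ i)
    have h2 := (Finset.sum_eq_zero_iff_of_nonneg
      (fun j _ => sq_nonneg (A i i - A j j))).mp h1 j (Finset.mem_univ j)
    have := sq_eq_zero_iff.mp h2
    linarith
  · intro i j hij
    have h1 := (Finset.sum_eq_zero_iff_of_nonneg
      (fun i _ => Finset.sum_nonneg fun j _ => mul_nonneg (hA i j) (hA j i))).mp hS0.symm.symm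
    have h1' := h1 i (Finset.mem_univ i)
    have h2 := (Finset.sum_eq_zero_iff_of_nonneg
      (fun j _ => mul_nonneg (hA i j) (hA j i))).mp h1' j
      (Finset.mem_erase.mpr ⟨hij.symm, Finset.mem_univ j⟩)
    exact h2
end

section
/- Let s be a positive integer, P(z) = 1 + Σ_{n=1}^s a_n z^n a real polynomial, and r > 0. If P^{(k)}(-r) ≥ 0 for all k = 0, 1, ..., s, then for each 1 ≤ n ≤ s we have 0 ≤ a_n ≤ binom(s,n)/r^n. -/
open Polynomial

/-- Bounds on the coefficients of a polynomial of degree at most `s` with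
constant term `1` which is absolutely monotonic at `-r`: each coefficient
`a_n` (for `1 ≤ n ≤ s`) satisfies `0 ≤ a_n ≤ (s choose n) / r^n`. -/
theorem coeff_bounds_of_absMonotonic (s : ℕ) (hs : 1 ≤ s)
    (P : Polynomial ℝ) (hP0 : P.coeff 0 = 1) (hdeg : P.natDegree ≤ s)
    (r : ℝ) (hr : 0 < r)
    (hmon : ∀ k ≤ s, 0 ≤ (Polynomial.derivative^[k] P).eval (-r)) :
    ∀ n, 1 ≤ n → n ≤ s →
      0 ≤ P.coeff n ∧ P.coeff n ≤ (s.choose n : ℝ) / r ^ n := by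
  set Q := Polynomial.taylor (-r) P with hQ
  set c : ℕ → ℝ := fun i => Q.coeff i with hc
  -- nonnegativity of Taylor coefficients
  have hcnn : ∀ i, 0 ≤ c i := by
    intro i
    by_cases hi : i ≤ s
    · have h1 : Nat.factorial i • (Polynomial.hasseDeriv i P) = Polynomial.derivative^[i] P := by
        have := congrFun (Polynomial.factorial_smul_hasseDeriv (R := ℝ) i) P
        simpa using this
      have h2 : c i = (Polynomial.hasseDeriv i P).eval (-r) := by
        simp [hc, hQ, Polynomial.taylor_coeff]
      have h3 : 0 ≤ (Nat.factorial i : ℝ) * (Polynomial.hasseDeriv i P).eval (-r) := by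
        have := hmon i hi
        rw [← h1] at this
        simpa [nsmul_eq_mul] using this
      have h5 : (0:ℝ) < (Nat.factorial i : ℝ) := by
        exact_mod_cast Nat.factorial_pos i
      rw [h2]
      nlinarith
    · have : Q.natDegree < i := by
        rw [hQ, Polynomial.natDegree_taylor]
        omega
      simp [hc, Polynomial.coeff_eq_zero_of_natDegree_lt this]
  -- coefficient formula
  have key : ∀ n, P.coeff n =
      ∑ i ∈ Finset.range (s + 1), c i * (r ^ (i - n) * (i.choose n : ℝ)) := by
    intro n
    conv_lhs => rw [← Polynomial.sum_taylor_eq P (-r)]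
    rw [Polynomial.sum_over_range' _ (by intro m; simp) (s + 1)
      (by rw [← hQ, Polynomial.natDegree_taylor]; omega)]
    rw [Polynomial.finset_sum_coeff]
    refine Finset.sum_congr rfl fun i _ => ?_
    rw [← hQ]
    have : Polynomial.X - Polynomial.C (-r) = Polynomial.X + Polynomial.C r := by
      rw [Polynomial.C_neg, sub_neg_eq_add]
    rw [this, Polynomial.coeff_C_mul, Polynomial.coeff_X_add_C_pow]
  -- the sum of c i * r ^ i equals 1
  have hsum1 : ∑ i ∈ Finset.range (s + 1), c i * r ^ i = 1 := by
    have := key 0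
    rw [hP0] at this
    rw [← this.symm]
    refine Finset.sum_congr rfl fun i _ => ?_
    simp
  intro n hn1 hns
  constructor
  · rw [key n]
    refine Finset.sum_nonneg fun i _ => ?_
    have := hcnn i
    positivity
  · rw [le_div_iff₀ (by positivity : (0:ℝ) < r ^ n)]
    rw [key n, Finset.sum_mul]
    calc ∑ i ∈ Finset.range (s + 1), c i * (r ^ (i - n) * (i.choose n : ℝ)) * r ^ n
        ≤ ∑ i ∈ Finset.range (s + 1), (s.choose n : ℝ) * (c i * r ^ i) := by
          refine Finset.sum_le_sum fun i hi => ?_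
          rcases le_or_gt n i with h | h
          · have hri : r ^ (i - n) * r ^ n = r ^ i := by
              rw [← pow_add]; congr 1; omega
            have hch : (i.choose n : ℝ) ≤ (s.choose n : ℝ) := by
              exact_mod_cast Nat.choose_le_choose n (Nat.lt_succ_iff.mp (Finset.mem_range.mp hi))
            have hcni := hcnn i
            have heq : c i * (r ^ (i - n) * (i.choose n : ℝ)) * r ^ n
                = (c i * r ^ i) * (i.choose n : ℝ) := by rw [← hri]; ring
            have h0 : 0 ≤ c i * r ^ i := by positivity
            rw [heq]
            calc (c i * r ^ i) * (i.choose n : ℝ)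
                ≤ (c i * r ^ i) * (s.choose n : ℝ) := mul_le_mul_of_nonneg_left hch h0
              _ = (s.choose n : ℝ) * (c i * r ^ i) := by ring
          · rw [Nat.choose_eq_zero_of_lt h]
            have := hcnn i
            have : (0:ℝ) ≤ (s.choose n : ℝ) * (c i * r ^ i) := by positivity
            simpa using this
      _ = (s.choose n : ℝ) := by
          rw [← Finset.mul_sum, hsum1, mul_one]
end

section
/- Let s be a positive integer, P(z) = 1 + Σ_{n=1}^s a_n z^n a real polynomial, and r > 0 with P^{(k)}(-r) ≥ 0 for all k = 0, 1, ..., s. If a_n = binom(s,n)/r^n for at least one index 1 ≤ n ≤ s, then P(z) = (1 + z/r)^s. -/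
open Polynomial

/-- Strict monotonicity of binomial coefficients in the top argument. -/
lemma choose_lt_choose_of_lt {k s n : ℕ} (hn : 1 ≤ n) (hns : n ≤ s) (hk : k < s) :
    k.choose n < s.choose n := by
  rcases lt_or_ge k n with h | h
  · rw [Nat.choose_eq_zero_of_lt h]
    exact Nat.choose_pos hns
  · have h1 : k.choose n < (k + 1).choose n := by
      obtain ⟨m, rfl⟩ : ∃ m, n = m + 1 := ⟨n - 1, by omega⟩
      rw [Nat.choose_succ_succ']
      have : 0 < k.choose m := Nat.choose_pos (by omega)
      omega
    exact lt_of_lt_of_le h1 (Nat.choose_le_choose n hk)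

/-- Uniqueness in the coefficient bound: if a polynomial of degree at most `s`
with constant term `1`, absolutely monotonic at `-r`, has some coefficient
attaining the maximal value `(s choose n) / r^n`, then `P(z) = (1 + z/r)^s`. -/
theorem eq_of_coeff_max (s : ℕ) (hs : 1 ≤ s)
    (P : Polynomial ℝ) (hP0 : P.coeff 0 = 1) (hdeg : P.natDegree ≤ s)
    (r : ℝ) (hr : 0 < r)
    (hmon : ∀ k ≤ s, 0 ≤ (Polynomial.derivative^[k] P).eval (-r))
    (hmax : ∃ n, 1 ≤ n ∧ n ≤ s ∧ P.coeff n = (s.choose n : ℝ) / r ^ n) :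
    P = (1 + Polynomial.C r⁻¹ * Polynomial.X) ^ s := by
  set Q : Polynomial ℝ := taylor (-r) P with hQ
  have hQdeg : Q.natDegree ≤ s := by rw [hQ, natDegree_taylor]; exact hdeg
  -- nonnegativity of the Taylor coefficients at -r
  have hq : ∀ k, 0 ≤ Q.coeff k := by
    intro k
    rcases le_or_gt k s with hk | hk
    · have h1 : (Nat.factorial k : ℝ) * Q.coeff k = (derivative^[k] P).eval (-r) := by
        rw [hQ, taylor_coeff]
        have h2 := congrFun (Polynomial.factorial_smul_hasseDeriv (R := ℝ) k) P
        simp only [LinearMap.smul_apply] at h2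
        rw [← h2, eval_smul, nsmul_eq_mul]
      have h3 : (0:ℝ) < (Nat.factorial k : ℝ) := by positivity
      nlinarith [hmon k hk, h3]
    · exact le_of_eq (coeff_eq_zero_of_natDegree_lt (lt_of_le_of_lt hQdeg hk)).symm
  have hPQ : P = taylor r Q := by
    rw [hQ, taylor_taylor, add_neg_cancel, taylor_zero]
  -- coefficient formula
  have hcoeff : ∀ m, P.coeff m
      = ∑ k ∈ Finset.range (s+1), Q.coeff k * (r ^ (k - m) * (k.choose m : ℝ)) := by
    intro m
    calc P.coeff m = (taylor r Q).coeff m := by rw [← hPQ]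
      _ = (taylor r (∑ i ∈ Finset.range (s+1), monomial i (Q.coeff i))).coeff m := by
          rw [← Q.as_sum_range' (s+1) (Nat.lt_succ_of_le hQdeg)]
      _ = _ := by
          rw [map_sum, finset_sum_coeff]
          refine Finset.sum_congr rfl fun k _ => ?_
          rw [taylor_monomial, coeff_C_mul, coeff_X_add_C_pow]
  obtain ⟨n, hn1, hns, hmaxn⟩ := hmax
  have e0 : ∑ k ∈ Finset.range (s+1), Q.coeff k * r ^ k = 1 := by
    have := hcoeff 0
    simpa [hP0] using this.symm
  have e1' : ∑ k ∈ Finset.range (s+1), Q.coeff k * r ^ k * (k.choose n : ℝ)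
      = (s.choose n : ℝ) := by
    have h := hcoeff n
    rw [hmaxn] at h
    have hrn : (r : ℝ) ^ n ≠ 0 := by positivity
    have h2 := congrArg (· * r ^ n) h
    simp only [div_mul_cancel₀ _ hrn, Finset.sum_mul] at h2
    rw [h2]
    refine (Finset.sum_congr rfl fun k _ => ?_).symm
    rcases le_or_gt n k with hkn | hkn
    · have h3 : r ^ (k - n) * r ^ n = r ^ k := by
        rw [← pow_add, Nat.sub_add_cancel hkn]
      rw [← h3]; ring
    · rw [Nat.choose_eq_zero_of_lt hkn]; push_cast; ring
  have ekey : ∑ k ∈ Finset.range (s+1),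
      Q.coeff k * r ^ k * ((s.choose n : ℝ) - (k.choose n : ℝ)) = 0 := by
    simp only [mul_sub, Finset.sum_sub_distrib, e1', ← Finset.sum_mul, e0, one_mul, sub_self]
  have hterm : ∀ k ∈ Finset.range (s+1),
      Q.coeff k * r ^ k * ((s.choose n : ℝ) - (k.choose n : ℝ)) = 0 := by
    refine (Finset.sum_eq_zero_iff_of_nonneg fun k hk => ?_).mp ekey
    · rw [Finset.mem_range] at hk
      have h1 : (k.choose n : ℝ) ≤ (s.choose n : ℝ) := by
        exact_mod_cast Nat.choose_le_choose n (Nat.lt_succ_iff.mp hk)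
      exact mul_nonneg (mul_nonneg (hq k) (by positivity)) (by linarith)
  have hzero : ∀ k < s, Q.coeff k = 0 := by
    intro k hk
    have h := hterm k (Finset.mem_range.mpr (by omega))
    have hlt : (k.choose n : ℝ) < (s.choose n : ℝ) := by
      exact_mod_cast choose_lt_choose_of_lt hn1 hns hk
    have hrk : (0:ℝ) < r ^ k := by positivity
    rcases mul_eq_zero.mp h with h' | h'
    · rcases mul_eq_zero.mp h' with h'' | h''
      · exact h''
      · exact absurd h'' hrk.ne'
    · linarith
  have hQs : Q.coeff s = r⁻¹ ^ s := by
    have h := e0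
    rw [Finset.sum_range_succ,
      Finset.sum_eq_zero (fun k hk => by rw [hzero k (Finset.mem_range.mp hk)]; ring),
      zero_add] at h
    rw [inv_pow]
    exact eq_inv_of_mul_eq_one_left (by linarith [h] )
  have hQeq : Q = monomial s (r⁻¹ ^ s) := by
    ext k
    rw [coeff_monomial]
    rcases lt_trichotomy k s with h | h | h
    · rw [hzero k h, if_neg (by omega : ¬ s = k)]
    · rw [if_pos h.symm, h, hQs]
    · rw [if_neg (by omega : ¬ s = k),
        coeff_eq_zero_of_natDegree_lt (lt_of_le_of_lt hQdeg h)]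
  have hone : (1 + C r⁻¹ * X : ℝ[X]) = C r⁻¹ * (X + C r) := by
    rw [mul_add, ← C_mul, inv_mul_cancel₀ hr.ne', C_1, add_comm]
  rw [hPQ, hQeq, taylor_monomial, hone, mul_pow, ← C_pow]
end

section
/- Let s be an integer with 3 ≤ s ≤ 8, and let P(z) = 1 + Σ_{k=1}^s a_k z^k be a real polynomial. Suppose P^{(k)}(-2s) ≥ 0 for all k = 0, 1, ..., s, and that (1/2)(a₁² - (1-a₁)²/s) ≥ a₂. Then P(z) = (1 + z/(2s))^s. -/
/-!
Expanding at `-2s` gives `P(z) = ∑ₖ tₖ (1 + z/(2s))ᵏ` with `tₖ = P⁽ᵏ⁾(-2s) (2s)ᵏ / k! ≥ 0`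
and `∑ₖ tₖ = P(0) = 1`, so `t` is a probability distribution on `{0, …, s}`. Its mean is
`M = 2s·a₁` and its second factorial moment is `2(2s)²a₂`, which by Jensen is at least
`M² - M`. The quadratic constraint then gives `(2s - M)² ≤ sM`, and since `M ≤ s` this forces
`M = s`: all the mass sits at `k = s`.
-/

open Polynomial Finset

section WeightedMean

variable {ι : Type*} {S : Finset ι} {t x : ι → ℝ} {c : ℝ}

theorem sum_mul_le_of_forall_le (ht : ∀ i ∈ S, 0 ≤ t i) (ht1 : ∑ i ∈ S, t i = 1)
    (hx : ∀ i ∈ S, x i ≤ c) : ∑ i ∈ S, x i * t i ≤ c :=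
  calc ∑ i ∈ S, x i * t i ≤ ∑ i ∈ S, c * t i :=
        sum_le_sum fun i hi => mul_le_mul_of_nonneg_right (hx i hi) (ht i hi)
    _ = c := by rw [← mul_sum, ht1, mul_one]

theorem sq_sum_mul_le_sum_sq_mul (ht : ∀ i ∈ S, 0 ≤ t i) (ht1 : ∑ i ∈ S, t i = 1) :
    (∑ i ∈ S, x i * t i) ^ 2 ≤ ∑ i ∈ S, x i ^ 2 * t i := by
  simpa [ht1] using sum_sq_le_sum_mul_sum_of_sq_le_mul S ht
    (fun i hi => mul_nonneg (sq_nonneg (x i)) (ht i hi)) (fun i _ => le_of_eq (by ring))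

theorem eq_zero_of_sum_mul_eq (ht : ∀ i ∈ S, 0 ≤ t i) (ht1 : ∑ i ∈ S, t i = 1)
    (hx : ∀ i ∈ S, x i ≤ c) (hmean : ∑ i ∈ S, x i * t i = c) {i : ι} (hi : i ∈ S)
    (hlt : x i < c) : t i = 0 := by
  have hsum : ∑ j ∈ S, (c - x j) * t j = 0 := by
    simp only [sub_mul, sum_sub_distrib, ← mul_sum, ht1, hmean]; ring
  have hnn : ∀ j ∈ S, 0 ≤ (c - x j) * t j := fun j hj =>
    mul_nonneg (sub_nonneg.2 (hx j hj)) (ht j hj)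
  exact ((mul_eq_zero.1 ((sum_eq_zero_iff_of_nonneg hnn).1 hsum i hi)).resolve_left
    (sub_ne_zero.2 hlt.ne'))

end WeightedMean

theorem sq_sum_mul_sub_le_two_mul_sum_choose_two_mul {S : Finset ℕ} {t : ℕ → ℝ}
    (ht : ∀ k ∈ S, 0 ≤ t k) (ht1 : ∑ k ∈ S, t k = 1) :
    (∑ k ∈ S, (k : ℝ) * t k) ^ 2 - ∑ k ∈ S, (k : ℝ) * t k
      ≤ 2 * ∑ k ∈ S, (k.choose 2 : ℝ) * t k := by
  have hfact : 2 * ∑ k ∈ S, (k.choose 2 : ℝ) * t k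
      = ∑ k ∈ S, (k : ℝ) ^ 2 * t k - ∑ k ∈ S, (k : ℝ) * t k := by
    rw [mul_sum, ← sum_sub_distrib]
    exact sum_congr rfl fun k _ => by rw [Nat.cast_choose_two]; ring
  linarith [sq_sum_mul_le_sum_sq_mul (x := fun k : ℕ => (k : ℝ)) ht ht1]

namespace Polynomial

theorem factorial_mul_coeff_taylor {R : Type*} [CommSemiring R] (P : R[X]) (a : R) (k : ℕ) :
    (k.factorial : R) * (taylor a P).coeff k = (derivative^[k] P).eval a := by
  rw [taylor_coeff, ← factorial_smul_hasseDeriv]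
  simp [nsmul_eq_mul]

theorem coeff_taylor_nonneg {P : ℝ[X]} {a : ℝ} {s : ℕ} (hdeg : P.natDegree ≤ s)
    (hmon : ∀ k ≤ s, 0 ≤ (derivative^[k] P).eval a) (k : ℕ) : 0 ≤ (taylor a P).coeff k := by
  rcases le_or_gt k s with hk | hk
  · have := factorial_mul_coeff_taylor P a k ▸ hmon k hk
    exact nonneg_of_mul_nonneg_right this (by positivity)
  · rw [coeff_eq_zero_of_natDegree_lt ((natDegree_taylor P a).trans_lt (hdeg.trans_lt hk))]

theorem coeff_taylor_mul_pow {R : Type*} [CommSemiring R] {Q : R[X]} {s : ℕ}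
    (hdeg : Q.natDegree ≤ s) (r : R) (n : ℕ) :
    (taylor r Q).coeff n * r ^ n = ∑ k ∈ range (s + 1), k.choose n * (Q.coeff k * r ^ k) := by
  conv_lhs => rw [Q.as_sum_range' (s + 1) (Nat.lt_succ_of_le hdeg)]
  simp only [map_sum, finsetSum_coeff, taylor_monomial, coeff_C_mul, coeff_X_add_C_pow, sum_mul]
  refine sum_congr rfl fun k _ => ?_
  rcases le_or_gt n k with hnk | hnk
  · rw [← pow_sub_mul_pow r hnk]; ring
  · simp [Nat.choose_eq_zero_of_lt hnk]

theorem eq_C_mul_X_pow_of_coeff_eq_zero {R : Type*} [Semiring R] {Q : R[X]} {s : ℕ}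
    (hdeg : Q.natDegree ≤ s) (h : ∀ k < s, Q.coeff k = 0) : Q = C (Q.coeff s) * X ^ s := by
  ext n
  rw [coeff_C_mul_X_pow]
  rcases lt_trichotomy n s with hn | rfl | hn
  · rw [h n hn, if_neg hn.ne]
  · rw [if_pos rfl]
  · rw [coeff_eq_zero_of_natDegree_lt (hdeg.trans_lt hn), if_neg hn.ne']

theorem taylor_C_mul_X_pow {K : Type*} [Field K] {r : K} (hr : r ≠ 0) (c : K) (s : ℕ) :
    taylor r (C c * X ^ s) = C (c * r ^ s) * (1 + C r⁻¹ * X) ^ s := by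
  rw [C_mul_X_pow_eq_monomial, taylor_monomial, C_mul, mul_assoc, C_pow, ← mul_pow, mul_add,
    mul_one, ← mul_assoc, ← C_mul, mul_inv_cancel₀ hr, C_1, one_mul, add_comm]

end Polynomial

theorem mean_eq_of_coeff_two_le {s M V a₁ a₂ : ℝ} (hs : 0 < s) (hMs : M ≤ s)
    (hV : M ^ 2 - M ≤ 2 * V) (ha₁ : a₁ * (2 * s) = M) (ha₂ : a₂ * (2 * s) ^ 2 = V)
    (hnl : a₂ ≤ 1 / 2 * (a₁ ^ 2 - (1 - a₁) ^ 2 / s)) : M = s := by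
  subst ha₁ ha₂
  have : (2 * s - a₁ * (2 * s)) ^ 2 ≤ s * (a₁ * (2 * s)) := by
    have h := mul_le_mul_of_nonneg_left hnl (by positivity : (0:ℝ) ≤ 2 * (2 * s) ^ 2 * s)
    field_simp at h
    nlinarith
  nlinarith

theorem eq_C_mul_X_pow_of_coeff_two_le {s : ℕ} (hs : 0 < s) {P Q : ℝ[X]}
    (hPQ : P = taylor (2 * s : ℝ) Q) (hdeg : Q.natDegree ≤ s) (hQ : ∀ k, 0 ≤ Q.coeff k)
    (hP0 : P.coeff 0 = 1)
    (hnl : P.coeff 2 ≤ 1 / 2 * (P.coeff 1 ^ 2 - (1 - P.coeff 1) ^ 2 / s)) :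
    Q = C (Q.coeff s) * X ^ s := by
  set r : ℝ := 2 * s
  set t : ℕ → ℝ := fun k => Q.coeff k * r ^ k
  have ht : ∀ k ∈ range (s + 1), 0 ≤ t k := fun k _ => mul_nonneg (hQ k) (by positivity)
  have hmoment (n : ℕ) : P.coeff n * r ^ n = ∑ k ∈ range (s + 1), k.choose n * t k := by
    rw [hPQ]; exact coeff_taylor_mul_pow hdeg r n
  have ht1 : ∑ k ∈ range (s + 1), t k = 1 := by simpa [hP0] using (hmoment 0).symm
  have hks : ∀ k ∈ range (s + 1), (k : ℝ) ≤ s := fun k hk => by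
    exact_mod_cast Nat.lt_succ_iff.1 (mem_range.1 hk)
  have hmean : ∑ k ∈ range (s + 1), (k : ℝ) * t k = s :=
    mean_eq_of_coeff_two_le (by positivity) (sum_mul_le_of_forall_le ht ht1 hks)
      (sq_sum_mul_sub_le_two_mul_sum_choose_two_mul ht ht1) (by simpa using hmoment 1)
      (hmoment 2) hnl
  refine eq_C_mul_X_pow_of_coeff_eq_zero hdeg fun k hk => ?_
  have := eq_zero_of_sum_mul_eq ht ht1 hks hmean (i := k) (mem_range.2 (by omega))
    (by exact_mod_cast hk)
  exact (mul_eq_zero.1 this).resolve_right (by positivity)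

theorem unique_poly_of_absMonotonic_general (s : ℕ) (hs3 : 3 ≤ s)
    (P : Polynomial ℝ) (hP0 : P.coeff 0 = 1) (hdeg : P.natDegree ≤ s)
    (hmon : ∀ k ≤ s, 0 ≤ (Polynomial.derivative^[k] P).eval (-(2 * (s : ℝ))))
    (hnl : P.coeff 2 ≤
      (1 / 2) * ((P.coeff 1) ^ 2 - (1 - P.coeff 1) ^ 2 / (s : ℝ))) :
    P = (1 + Polynomial.C (1 / (2 * (s : ℝ))) * Polynomial.X) ^ s := by
  set r : ℝ := 2 * s
  have hr : r ≠ 0 := by positivity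
  set Q := taylor (-r) P
  have hPQ : P = taylor r Q := by rw [taylor_taylor, add_neg_cancel, taylor_zero]
  have hQ : Q = C (Q.coeff s) * X ^ s :=
    eq_C_mul_X_pow_of_coeff_two_le (by omega) hPQ ((natDegree_taylor P _).trans_le hdeg)
      (coeff_taylor_nonneg hdeg hmon) hP0 hnl
  have hP : P = C (Q.coeff s * r ^ s) * (1 + C r⁻¹ * X) ^ s := by
    rw [hPQ, ← taylor_C_mul_X_pow hr, ← hQ]
  have hc : Q.coeff s * r ^ s = 1 := by simpa [hP, coeff_zero_eq_eval_zero] using hP0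
  rw [hP, hc, C_1, one_mul, one_div]

/-- Uniqueness for polynomials related to `Π̂_{s/s,2}`: for `3 ≤ s ≤ 8`, if a
real polynomial `P` of degree at most `s` with constant term `1` satisfies
`P^{(k)}(-2s) ≥ 0` for `k = 0, …, s` and
`(1/2)(a₁² - (1-a₁)²/s) ≥ a₂`, then `P(z) = (1 + z/(2s))^s`. -/
theorem unique_poly_of_absMonotonic (s : ℕ) (hs3 : 3 ≤ s) (hs8 : s ≤ 8)
    (P : Polynomial ℝ) (hP0 : P.coeff 0 = 1) (hdeg : P.natDegree ≤ s)
    (hmon : ∀ k ≤ s, 0 ≤ (Polynomial.derivative^[k] P).eval (-(2 * (s : ℝ))))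
    (hnl : P.coeff 2 ≤
      (1 / 2) * ((P.coeff 1) ^ 2 - (1 - P.coeff 1) ^ 2 / (s : ℝ))) :
    P = (1 + Polynomial.C (1 / (2 * (s : ℝ))) * Polynomial.X) ^ s :=
  unique_poly_of_absMonotonic_general s hs3 P hP0 hdeg hmon hnl
end

section
/- For every integer s ≥ 2, the function ψ_s(x) = (2^s - 2)/(2^s + 1) + (3/(4^s - 1))·Σ_{m=1}^s 1/(2^{1-m} - x) satisfies ψ_s(0) = 1, ψ_s'(0) = 1, and ψ_s^{(k)}(x) ≥ 0 for all k ∈ ℕ and all x ≤ 0. -/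
/-!
Each summand `1 / (c - x)` has `k`-th derivative `k! / (c - x)^(k+1)`, which is positive for
`x < c`; all nodes `c = 2^(1-m)` are positive and both coefficients are nonnegative, so every
derivative of `ψ_s` is nonnegative on `x ≤ 0`. The two normalisations at `0` are the geometric
sums `∑ 2^(m-1) = 2^s - 1` and `∑ 4^(m-1) = (4^s - 1) / 3`.
-/

open Finset
open scoped Nat

section

variable {𝕜 : Type*} [NontriviallyNormedField 𝕜]

theorem iteratedDeriv_inv_const_sub (k : ℕ) (c x : 𝕜) :
    iteratedDeriv k (fun y => (c - y)⁻¹) x = k ! / (c - x) ^ (k + 1) := by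
  have h := congr_fun (iter_deriv_inv_linear k (-1 : 𝕜) c) x
  simp only [neg_one_mul, neg_add_eq_sub] at h
  rw [iteratedDeriv_eq_iterate, h, mul_right_comm _ _ ((-1 : 𝕜) ^ k), ← mul_pow,
    show (-1 - k : ℤ) = -((k + 1 : ℕ) : ℤ) by push_cast; ring, zpow_neg, zpow_natCast]
  norm_num [div_eq_mul_inv]

theorem iteratedDeriv_const_add_mul_sum_inv_sub {ι : Type*} (I : Finset ι) (a b : 𝕜)
    (c : ι → 𝕜) {k : ℕ} (hk : k ≠ 0) {x : 𝕜} (hx : ∀ i ∈ I, x ≠ c i) :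
    iteratedDeriv k (fun y => a + b * ∑ i ∈ I, (c i - y)⁻¹) x
      = b * ∑ i ∈ I, k ! / (c i - x) ^ (k + 1) := by
  rw [iteratedDeriv_const_add (Nat.pos_of_ne_zero hk), iteratedDeriv_const_mul_field,
    iteratedDeriv_fun_sum (f := fun i y => (c i - y)⁻¹) fun i hi =>
      (contDiffAt_const.sub contDiffAt_id).inv (sub_ne_zero.2 (hx i hi).symm)]
  simp only [iteratedDeriv_inv_const_sub]

end

theorem iteratedDeriv_const_add_mul_sum_inv_sub_nonneg {ι : Type*} (I : Finset ι) {a b : ℝ}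
    (c : ι → ℝ) (ha : 0 ≤ a) (hb : 0 ≤ b) (k : ℕ) {x : ℝ} (hx : ∀ i ∈ I, x < c i) :
    0 ≤ iteratedDeriv k (fun y => a + b * ∑ i ∈ I, (c i - y)⁻¹) x := by
  have hpos i (hi : i ∈ I) : 0 < c i - x := sub_pos.2 (hx i hi)
  rcases eq_or_ne k 0 with rfl | hk
  · rw [iteratedDeriv_zero]
    exact add_nonneg ha (mul_nonneg hb (sum_nonneg fun i hi => (inv_pos.2 (hpos i hi)).le))
  · rw [iteratedDeriv_const_add_mul_sum_inv_sub I a b c hk fun i hi => (hx i hi).ne]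
    exact mul_nonneg hb (sum_nonneg fun i hi => by have := hpos i hi; positivity)

theorem sum_Icc_inv_zpow_one_sub_pow {K : Type*} [DivisionRing K] (r : K) (n s : ℕ) :
    ∑ m ∈ Icc 1 s, ((r ^ ((1 : ℤ) - m))⁻¹) ^ n = ∑ i ∈ range s, (r ^ n) ^ i := by
  rw [← Finset.Ico_add_one_right_eq_Icc, sum_Ico_eq_sum_range, Nat.add_sub_cancel]
  refine sum_congr rfl fun i _ => ?_
  rw [← zpow_neg, neg_sub, ← pow_mul, mul_comm, pow_mul]
  push_cast
  simp

theorem sum_Icc_inv_two_zpow_one_sub (s : ℕ) :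
    ∑ m ∈ Icc 1 s, ((2 : ℝ) ^ ((1 : ℤ) - m))⁻¹ = 2 ^ s - 1 := by
  have h := sum_Icc_inv_zpow_one_sub_pow (2 : ℝ) 1 s
  norm_num [geom_sum_eq] at h
  exact h

theorem sum_Icc_inv_two_zpow_one_sub_sq (s : ℕ) :
    ∑ m ∈ Icc 1 s, ((2 : ℝ) ^ ((1 : ℤ) - m))⁻¹ ^ 2 = (4 ^ s - 1) / 3 := by
  rw [sum_Icc_inv_zpow_one_sub_pow, geom_sum_eq (by norm_num)]
  norm_num

/-- The function
`ψ_s(x) = (2^s - 2)/(2^s + 1) + (3/(4^s - 1)) ∑_{m=1}^s 1/(2^{1-m} - x)`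
satisfies `ψ_s(0) = 1`, `ψ_s'(0) = 1`, and all of its derivatives are
nonnegative at every `x ≤ 0`. -/
theorem psi_s_absolutely_monotonic (s : ℕ) (hs : 2 ≤ s) :
    let f : ℝ → ℝ := fun x =>
      ((2 : ℝ) ^ s - 2) / ((2 : ℝ) ^ s + 1) +
        (3 / ((4 : ℝ) ^ s - 1)) *
          ∑ m ∈ Finset.Icc 1 s, 1 / ((2 : ℝ) ^ ((1 : ℤ) - (m : ℤ)) - x)
    f 0 = 1 ∧ deriv f 0 = 1 ∧
      ∀ (k : ℕ) (x : ℝ), x ≤ 0 → 0 ≤ iteratedDeriv k f x := by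
  intro f
  simp only [f, one_div]
  have h2 : (2 : ℝ) < 2 ^ s := lt_self_pow₀ one_lt_two (by omega)
  have h4 : (4 : ℝ) ^ s - 1 = (2 ^ s + 1) * (2 ^ s - 1) := by
    rw [show (4 : ℝ) = 2 ^ 2 by norm_num, ← pow_mul, mul_comm, pow_mul]; ring
  have h4_pos : (0 : ℝ) < 4 ^ s - 1 := by rw [h4]; nlinarith
  have hc : ∀ m ∈ Icc 1 s, (0 : ℝ) < 2 ^ ((1 : ℤ) - m) := fun m _ => by positivity
  refine ⟨?_, ?_, fun k x hx => ?_⟩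
  · have : (2 : ℝ) ^ s + 1 ≠ 0 := by positivity
    have : (2 : ℝ) ^ s - 1 ≠ 0 := by linarith
    simp only [sub_zero, sum_Icc_inv_two_zpow_one_sub, h4]
    field_simp
    ring
  · rw [← iteratedDeriv_one, iteratedDeriv_const_add_mul_sum_inv_sub _ _ _ _ one_ne_zero
      fun m hm => (hc m hm).ne]
    simp only [sub_zero, Nat.factorial_one, Nat.cast_one, one_div, ← inv_pow,
      sum_Icc_inv_two_zpow_one_sub_sq]
    field_simp [h4_pos.ne']
  · exact iteratedDeriv_const_add_mul_sum_inv_sub_nonneg _ _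
      (div_nonneg (by linarith) (by linarith)) (div_nonneg (by norm_num) h4_pos.le) k
      fun m hm => hx.trans_lt (hc m hm)
end

section
/- Let s ≥ 1 be an integer, P a polynomial, Q(z) = 1 - a·z with a ∈ ℝ, and ψ = P/Q^s. Then for every k ∈ ℕ, wherever Q does not vanish, ψ^{(k)} = ((-Q')^k · k! / Q^{s+k}) · Σ_{m=0}^{min(k,s)} (1/m!) · binom(s-1+k-m, s-1) · (-Q/Q')^m · P^{(m)}, provided a ≠ 0 (so Q' = -a ≠ 0). -/
open Polynomial

/-! Write `ψ = P · (Q^s)⁻¹` and apply the Leibniz rule. Since `Q` is affine, `(Q^s)⁻¹` is a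
rescaled translate of `w ↦ w^(-s)`, so its `j`-th derivative is `s(s+1)⋯(s+j-1) aʲ / Q^(s+j)`.
The binomial and rising-factorial coefficients combine into `k!/m! · C(s-1+k-m, s-1)`, and the
terms with `m > s` drop out because `deg P ≤ s`. -/

section

variable {𝕜 : Type*} [NontriviallyNormedField 𝕜]

theorem iteratedDeriv_comp_mul_left {F : Type*} [NormedAddCommGroup F] [NormedSpace 𝕜 F]
    (f : 𝕜 → F) (c : 𝕜) (n : ℕ) :
    iteratedDeriv n (fun x => f (c * x)) = fun x => c ^ n • iteratedDeriv n f (c * x) := by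
  induction n with
  | zero => simp
  | succ n ih =>
    ext x
    rw [iteratedDeriv_succ, ih, deriv_fun_const_smul_field, deriv_comp_mul_left, smul_smul,
      ← pow_succ, iteratedDeriv_succ]

theorem Polynomial.iteratedDeriv_eval (p : 𝕜[X]) (n : ℕ) :
    iteratedDeriv n (fun x => p.eval x) = fun x => (derivative^[n] p).eval x := by
  induction n generalizing p with
  | zero => simp
  | succ n ih =>
    have hderiv : _root_.deriv (fun x => p.eval x) = fun x => (derivative p).eval x := by
      ext x
      exact p.deriv
    rw [iteratedDeriv_succ', hderiv, ih, Function.iterate_succ_apply]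

theorem neg_one_pow_mul_prod_neg_sub_eq_ascFactorial (s n : ℕ) :
    (-1) ^ n * ∏ i ∈ Finset.range n, (((-s : ℤ) : 𝕜) - i) = s.ascFactorial n := by
  induction n with
  | zero => simp
  | succ n ih =>
    rw [Finset.prod_range_succ, Nat.ascFactorial_succ, Nat.cast_mul, ← ih]
    push_cast
    ring

theorem iteratedDeriv_inv_one_sub_mul_pow (a : 𝕜) (s n : ℕ) :
    iteratedDeriv n (fun z => ((1 - a * z) ^ s)⁻¹) =
      fun z => s.ascFactorial n * a ^ n / (1 - a * z) ^ (s + n) := by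
  have hcomp : (fun z => ((1 - a * z) ^ s)⁻¹) =
      fun z => (fun w => (1 - w) ^ (-(s : ℤ))) (a * z) := by
    simp [zpow_neg]
  have hexp : -(s : ℤ) - n = -((s + n : ℕ) : ℤ) := by push_cast; ring
  rw [hcomp, iteratedDeriv_comp_mul_left (fun w => (1 - w) ^ (-(s : ℤ))),
    iteratedDeriv_comp_const_sub n (fun w => w ^ (-(s : ℤ))), iteratedDeriv_eq_iterate,
    iter_deriv_zpow', ← neg_one_pow_mul_prod_neg_sub_eq_ascFactorial, hexp]
  ext z
  simp only [smul_eq_mul, zpow_neg, zpow_natCast]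
  ring

end

theorem Nat.factorial_mul_choose_mul_ascFactorial {s : ℕ} (hs : 1 ≤ s) (m j : ℕ) :
    m.factorial * ((m + j).choose m * s.ascFactorial j) =
      (m + j).factorial * (s - 1 + j).choose (s - 1) := by
  obtain ⟨t, rfl⟩ : ∃ t, s = t + 1 := ⟨s - 1, by omega⟩
  rw [Nat.ascFactorial_eq_factorial_mul_choose, Nat.add_sub_cancel,
    ← Nat.choose_symm_add (a := t),
    ← Nat.choose_mul_factorial_mul_factorial (Nat.le_add_right m j), Nat.add_sub_cancel_left]
  ring

/-- Explicit formula for the `k`-th derivative of `ψ = P / Q^s` where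
`Q(z) = 1 - a z` with `a ≠ 0` (so `Q' ≡ -a`): wherever `Q` does not vanish,
`ψ^{(k)} = ((-Q')^k k! / Q^{s+k}) ∑_{m=0}^{min(k,s)} (1/m!) C(s-1+k-m, s-1)
(-Q/Q')^m P^{(m)}`. -/
theorem deriv_formula_psi (s : ℕ) (hs : 1 ≤ s) (a : ℝ) (ha : a ≠ 0)
    (P : Polynomial ℝ) (hdeg : P.natDegree ≤ s) (k : ℕ) (x : ℝ)
    (hx : 1 - a * x ≠ 0) :
    iteratedDeriv k (fun z => P.eval z / (1 - a * z) ^ s) x =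
      ((-(-a)) ^ k * (k.factorial : ℝ) / (1 - a * x) ^ (s + k)) *
        ∑ m ∈ Finset.range (min k s + 1),
          (1 / (m.factorial : ℝ)) * ((s - 1 + k - m).choose (s - 1) : ℝ) *
            (-(1 - a * x) / (-a)) ^ m *
            (Polynomial.derivative^[m] P).eval x := by
  have hP : ContDiffAt ℝ k (fun z => P.eval z) x := (P.contDiff_aeval k).contDiffAt
  have hQ : ContDiffAt ℝ k (fun z => ((1 - a * z) ^ s)⁻¹) x := by
    fun_prop (disch := exact pow_ne_zero s hx)
  simp only [div_eq_mul_inv (P.eval _), iteratedDeriv_fun_mul hP hQ, P.iteratedDeriv_eval,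
    iteratedDeriv_inv_one_sub_mul_pow, neg_neg, neg_div_neg_eq, Finset.mul_sum]
  have hvanish : ∀ m ∈ Finset.range (k + 1), m ∉ Finset.range (min k s + 1) →
      (k.choose m : ℝ) * (derivative^[m] P).eval x *
        (s.ascFactorial (k - m) * a ^ (k - m) / (1 - a * x) ^ (s + (k - m))) = 0 := by
    intro m hmk hms
    simp only [iterate_derivative_eq_zero (p := P) (x := m) (by simp at hmk hms; omega),
      eval_zero, mul_zero, zero_mul]
  rw [← Finset.sum_subset (Finset.range_subset_range.mpr (by omega)) hvanish]
  refine Finset.sum_congr rfl fun m hm => ?_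
  obtain ⟨j, rfl⟩ : ∃ j, k = m + j := ⟨k - m, by simp at hm; omega⟩
  have hcoeff := congrArg (Nat.cast (R := ℝ)) (Nat.factorial_mul_choose_mul_ascFactorial hs m j)
  push_cast at hcoeff
  rw [Nat.add_sub_cancel_left, show s - 1 + (m + j) - m = s - 1 + j by omega, div_pow]
  field_simp
  linear_combination (eval x (derivative^[m] P) * a ^ (m + j) * (1 - a * x) ^ (s + (m + j))) *
    hcoeff
end

section
/- The rational function ψ(x) = ((2+√3)·((√3-1)x² + 2√3·x + 6))/((√3 + 3 - x)²) satisfies, for every integer k ≥ 1 and every x < 3 + √3, ψ^{(k)}(x) = 6·k!·((12k-3) + √3(7k-2) + (3+2√3)x)/((√3+3-x)^{k+2}); consequently ψ^{(k)}(x) ≥ 0 for all k ≥ 0 and all x ∈ [-1-√3, 0]. -/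
/-!
With `c = 3 + √3`, the function `ψ` has the partial fraction decomposition
`ψ(x) = (1 + √3) - (18 + 12√3)/(c - x) + (72 + 42√3)/(c - x)²`, and differentiating
`β/(c - x) + γ/(c - x)²` `k` times gives `k! (β (c - x) + (k + 1) γ)/(c - x)^(k + 2)`.
For `ψ` the numerator is `6 ((12 + 7√3)(k - 1) + (3 + 2√3)(x + 1 + √3))`, which is
nonnegative for `k ≥ 1` and `x ≥ -1 - √3`; `ψ` itself is nonnegative everywhere.
-/

open Nat Filter Topology

section PartialFractions

variable {𝕜 : Type*} [NontriviallyNormedField 𝕜]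

theorem hasDerivAt_add_mul_sub_div_sub_pow (P Q : 𝕜) {c x : 𝕜} (hx : x ≠ c) (n : ℕ) :
    HasDerivAt (fun y => (P + Q * (c - y)) / (c - y) ^ (n + 1))
      (((n + 1) * P + n * Q * (c - x)) / (c - x) ^ (n + 2)) x := by
  have hu : c - x ≠ 0 := sub_ne_zero.2 hx.symm
  have hsub : HasDerivAt (fun y => c - y) (-1) x := by
    simpa using (hasDerivAt_id x).const_sub c
  have hquot := ((hsub.const_mul Q).const_add P).div (hsub.fun_pow (n + 1)) (pow_ne_zero _ hu)
  refine hquot.congr_deriv ?_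
  field_simp
  push_cast
  ring

theorem iteratedDeriv_div_sub_add_div_sub_sq (β γ : 𝕜) {c x : 𝕜} (hx : x ≠ c) (k : ℕ) :
    iteratedDeriv k (fun y => β / (c - y) + γ / (c - y) ^ 2) x =
      k ! * (β * (c - x) + (k + 1) * γ) / (c - x) ^ (k + 2) := by
  induction k generalizing x with
  | zero =>
    have hu : c - x ≠ 0 := sub_ne_zero.2 hx.symm
    rw [iteratedDeriv_zero]
    field_simp
    push_cast
    ring
  | succ k ih =>
    have hk : iteratedDeriv k (fun y => β / (c - y) + γ / (c - y) ^ 2) =ᶠ[𝓝 x]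
        fun y => (k ! * (k + 1) * γ + k ! * β * (c - y)) / (c - y) ^ (k + 1 + 1) := by
      filter_upwards [isOpen_ne.mem_nhds hx] with y hy
      rw [ih hy]
      ring
    have hu : c - x ≠ 0 := sub_ne_zero.2 hx.symm
    rw [iteratedDeriv_succ, hk.deriv_eq,
      (hasDerivAt_add_mul_sub_div_sub_pow _ _ hx (k + 1)).deriv, factorial_succ]
    field_simp
    push_cast
    ring

end PartialFractions

open Real

noncomputable def psi233 (x : ℝ) : ℝ :=
  (2 + √3) * ((√3 - 1) * x ^ 2 + 2 * √3 * x + 6) / (√3 + 3 - x) ^ 2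

theorem psi233_eq_const_add_div_add_div_sq {x : ℝ} (hx : x ≠ √3 + 3) :
    psi233 x =
      (1 + √3) + (-(18 + 12 * √3) / (√3 + 3 - x) + (72 + 42 * √3) / (√3 + 3 - x) ^ 2) := by
  have hu : √3 + 3 - x ≠ 0 := sub_ne_zero.2 hx.symm
  have hs : √3 ^ 2 = 3 := sq_sqrt (by norm_num)
  unfold psi233
  field_simp
  linear_combination (x ^ 2 + 4 * x + 5 - √3) * hs

theorem iteratedDeriv_psi233 {k : ℕ} (hk : 1 ≤ k) {x : ℝ} (hx : x < 3 + √3) :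
    iteratedDeriv k psi233 x =
      6 * k ! * ((12 * k - 3) + √3 * (7 * k - 2) + (3 + 2 * √3) * x) / (√3 + 3 - x) ^ (k + 2) := by
  have hx' : x ≠ √3 + 3 := by linarith
  have hψ : psi233 =ᶠ[𝓝 x] fun y =>
      (1 + √3) + (-(18 + 12 * √3) / (√3 + 3 - y) + (72 + 42 * √3) / (√3 + 3 - y) ^ 2) := by
    filter_upwards [isOpen_ne.mem_nhds hx'] with y hy
    exact psi233_eq_const_add_div_add_div_sq hy
  have hs : √3 ^ 2 = 3 := sq_sqrt (by norm_num)
  rw [hψ.iteratedDeriv_eq, iteratedDeriv_const_add hk, iteratedDeriv_div_sub_add_div_sub_sq _ _ hx']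
  congr 1
  linear_combination (-12 * k !) * hs

theorem psi233_nonneg (x : ℝ) : 0 ≤ psi233 x := by
  have hs : √3 ^ 2 = 3 := sq_sqrt (by norm_num)
  have hs1 : 1 < √3 := by nlinarith [sqrt_nonneg 3]
  -- the discriminant of the quadratic factor is `36 - 24√3 < 0`
  have hq : 0 ≤ (√3 - 1) * x ^ 2 + 2 * √3 * x + 6 := by
    nlinarith [sq_nonneg ((√3 - 1) * x + √3)]
  unfold psi233
  positivity

theorem iteratedDeriv_psi233_nonneg {k : ℕ} (hk : 1 ≤ k) {x : ℝ} (hx₁ : -1 - √3 ≤ x)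
    (hx₂ : x < 3 + √3) : 0 ≤ iteratedDeriv k psi233 x := by
  have hs : √3 ^ 2 = 3 := sq_sqrt (by norm_num)
  have hk' : (1 : ℝ) ≤ k := by exact_mod_cast hk
  have hnum : (12 * k - 3) + √3 * (7 * k - 2) + (3 + 2 * √3) * x =
      (12 + 7 * √3) * (k - 1) + (3 + 2 * √3) * (x + 1 + √3) := by
    linear_combination (-2) * hs
  have := sqrt_nonneg 3
  have : 0 ≤ k - (1 : ℝ) := by linarith
  have : 0 ≤ x + 1 + √3 := by linarith
  have : 0 < √3 + 3 - x := by linarith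
  rw [iteratedDeriv_psi233 hk hx₂, hnum]
  positivity

/-- For the optimal function `ψ` in `Π_{2/2,3}`:
`ψ(x) = (2+√3)((√3-1)x² + 2√3 x + 6)/(√3+3-x)²`, one has for all `k ≥ 1` and
`x < 3 + √3` the explicit derivative formula, and consequently
`ψ^{(k)}(x) ≥ 0` for all `k ≥ 0` and all `x ∈ [-1-√3, 0]`. -/
theorem psi_233_derivatives :
    let ψ : ℝ → ℝ := fun x =>
      (2 + Real.sqrt 3) * ((Real.sqrt 3 - 1) * x ^ 2 + 2 * Real.sqrt 3 * x + 6) /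
        (Real.sqrt 3 + 3 - x) ^ 2
    (∀ (k : ℕ), 1 ≤ k → ∀ x : ℝ, x < 3 + Real.sqrt 3 →
      iteratedDeriv k ψ x =
        6 * (k.factorial : ℝ) *
          ((12 * (k : ℝ) - 3) + Real.sqrt 3 * (7 * (k : ℝ) - 2) +
            (3 + 2 * Real.sqrt 3) * x) /
          (Real.sqrt 3 + 3 - x) ^ (k + 2)) ∧
    (∀ (k : ℕ) (x : ℝ), -1 - Real.sqrt 3 ≤ x → x ≤ 0 →
      0 ≤ iteratedDeriv k ψ x) := by
  intro ψ
  refine ⟨fun k hk x hx => iteratedDeriv_psi233 hk hx, fun k x hx₁ hx₂ => ?_⟩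
  rcases k.eq_zero_or_pos with rfl | hk
  · exact psi233_nonneg x
  · exact iteratedDeriv_psi233_nonneg hk hx₁ (by linarith [sqrt_nonneg 3])
end

section
/- Define ψ_a(z) = ((1/2)(2a² - 4a + 1)z² + (1-2a)z + 1)/(1 - a z)² for a > 0. If ψ_a(-4) ≥ 0, ψ_a'(-4) ≥ 0, and the coefficient condition 1/2 - a ≥ 0 holds (which is necessary for ψ_a^{(k)}(-4) ≥ 0 for all k ≥ 2), then a = 1/4. -/
/-!
Writing `ψ_a = N / D²` with `D z = 1 - a z`, the quotient rule collapses to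
`ψ_a' z = ((1 - 3a) z + 1) / D z ³`. At `z = -4` with `a > 0` the denominators are positive,
so `ψ_a(-4) ≥ 0` reads `(4a - 1)(4a - 5) ≥ 0` and `ψ_a'(-4) ≥ 0` reads `a ≥ 1/4`;
together with `a ≤ 1/2` only `a = 1/4` survives.
-/

namespace PiHat222

noncomputable def psi (a z : ℝ) : ℝ :=
  ((1 / 2) * (2 * a ^ 2 - 4 * a + 1) * z ^ 2 + (1 - 2 * a) * z + 1) / (1 - a * z) ^ 2

theorem hasDerivAt_psi {a z : ℝ} (hz : 1 - a * z ≠ 0) :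
    HasDerivAt (psi a) (((1 - 3 * a) * z + 1) / (1 - a * z) ^ 3) z := by
  have hnum : HasDerivAt
      (fun z : ℝ => (1 / 2) * (2 * a ^ 2 - 4 * a + 1) * z ^ 2 + (1 - 2 * a) * z + 1)
      ((2 * a ^ 2 - 4 * a + 1) * z + (1 - 2 * a)) z :=
    ((((hasDerivAt_pow 2 z).const_mul ((1 / 2) * (2 * a ^ 2 - 4 * a + 1))).add
      ((hasDerivAt_id z).const_mul (1 - 2 * a))).add_const 1).congr_deriv (by push_cast; ring)
  have hden : HasDerivAt (fun z : ℝ => (1 - a * z) ^ 2) (2 * (1 - a * z) * (-a)) z :=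
    ((((hasDerivAt_id z).const_mul a).const_sub 1).pow 2).congr_deriv (by simp only [id]; ring)
  exact (hnum.div hden (pow_ne_zero 2 hz)).congr_deriv (by field_simp; ring)

theorem psi_neg_four (a : ℝ) : psi a (-4) = (16 * a ^ 2 - 24 * a + 5) / (1 + 4 * a) ^ 2 := by
  unfold psi
  ring_nf

theorem deriv_psi_neg_four {a : ℝ} (ha : 1 + 4 * a ≠ 0) :
    deriv (psi a) (-4) = (12 * a - 3) / (1 + 4 * a) ^ 3 := by
  rw [(hasDerivAt_psi (by convert ha using 1; ring)).deriv]
  ring_nf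

theorem eq_quarter_of_constraints {a : ℝ} (h₀ : 0 ≤ 16 * a ^ 2 - 24 * a + 5)
    (h₁ : 0 ≤ 12 * a - 3) (h₂ : 0 ≤ 1 / 2 - a) : a = 1 / 4 := by
  nlinarith

end PiHat222

/-- In the class `Π̂_{2/2,2}`, with
`ψ_a(z) = ((1/2)(2a² - 4a + 1)z² + (1-2a)z + 1)/(1 - a z)²` and `a > 0`:
if `ψ_a(-4) ≥ 0`, `ψ_a'(-4) ≥ 0`, and `1/2 - a ≥ 0`, then `a = 1/4`. -/
theorem unique_a_in_pihat_2_2_2 (a : ℝ) (ha : 0 < a) :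
    let ψ : ℝ → ℝ := fun z =>
      ((1 / 2) * (2 * a ^ 2 - 4 * a + 1) * z ^ 2 + (1 - 2 * a) * z + 1) /
        (1 - a * z) ^ 2
    0 ≤ ψ (-4) → 0 ≤ deriv ψ (-4) → 0 ≤ 1 / 2 - a → a = 1 / 4 := by
  intro ψ hψ hψ' hcoeff
  change 0 ≤ PiHat222.psi a (-4) at hψ
  change 0 ≤ deriv (PiHat222.psi a) (-4) at hψ'
  have hpos : 0 < 1 + 4 * a := by linarith
  rw [PiHat222.psi_neg_four, le_div_iff₀ (by positivity), zero_mul] at hψ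
  rw [PiHat222.deriv_psi_neg_four hpos.ne', le_div_iff₀ (by positivity), zero_mul] at hψ'
  exact PiHat222.eq_quarter_of_constraints hψ hψ' hcoeff
end

section
/- The function ψ(z) = (1 + z/4)²/(1 - z/4)² satisfies ψ^{(k)}(x) ≥ 0 for all integers k ≥ 0 and all x ∈ [-4, 0], and ψ(0) = ψ'(0) = ψ''(0) = 1 (so ψ approximates exp to order 2 at the origin). -/
/-!
Since `(1 + z/4)/(1 - z/4) = 8/(4 - z) - 1`, the function has the partial fraction expansion
`ψ(z) = 1 - 16/(4 - z) + 64/(4 - z)²`, whose `k`-th derivative for `k ≥ 1` is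
`64 (k+1)!/(4 - z)^(k+2) - 16 k!/(4 - z)^(k+1) = 16 k! (4k + z)/(4 - z)^(k+2)`.
This is nonnegative for `-4 ≤ z < 4`, and at `z = 0` it gives `ψ'(0) = ψ''(0) = 1`.
-/

open Nat

theorem iteratedDeriv_inv_const_sub_pow {𝕜 : Type*} [NontriviallyNormedField 𝕜]
    (c : 𝕜) (n k : ℕ) (x : 𝕜) :
    iteratedDeriv k (fun z => ((c - z) ^ n)⁻¹) x = n.ascFactorial k * ((c - x) ^ (n + k))⁻¹ := by
  have h := congr_fun (iteratedDeriv_comp_const_sub k (fun y : 𝕜 => y ^ (-(n : ℤ))) c) x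
  rw [iteratedDeriv_eq_iterate (f := fun y : 𝕜 => y ^ (-(n : ℤ))), iter_deriv_zpow] at h
  simp only [zpow_neg, zpow_natCast] at h
  have hsign : (-1 : 𝕜) ^ k * ∏ i ∈ Finset.range k, (((-(n : ℤ) : ℤ) : 𝕜) - i)
      = n.ascFactorial k := by
    rw [← Finset.card_range k, ← Finset.prod_const, Finset.card_range, ← Finset.prod_mul_distrib,
      ascFactorial_eq_prod_range]
    push_cast
    exact Finset.prod_congr rfl fun i _ => by ring
  rw [h, smul_eq_mul, ← mul_assoc, hsign, ← neg_add', zpow_neg, ← Nat.cast_add, zpow_natCast]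

noncomputable def psi222 (z : ℝ) : ℝ := (1 + z / 4) ^ 2 / (1 - z / 4) ^ 2

lemma psi222_eq_of_ne {z : ℝ} (hz : z ≠ 4) :
    psi222 z = 1 + (64 * ((4 - z) ^ 2)⁻¹ - 16 * ((4 - z) ^ 1)⁻¹) := by
  have : (4 : ℝ) - z ≠ 0 := sub_ne_zero.mpr hz.symm
  have : (1 : ℝ) - z / 4 ≠ 0 := by contrapose! this; linarith
  unfold psi222
  field_simp
  ring

lemma iteratedDeriv_psi222 {k : ℕ} (hk : k ≠ 0) {x : ℝ} (hx : x ≠ 4) :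
    iteratedDeriv k psi222 x = 16 * k ! * (4 * k + x) / (4 - x) ^ (k + 2) := by
  have hnhds : psi222 =ᶠ[nhds x]
      fun z => 1 + (64 * ((4 - z) ^ 2)⁻¹ - 16 * ((4 - z) ^ 1)⁻¹) := by
    filter_upwards [isOpen_ne.mem_nhds hx] with z hz using psi222_eq_of_ne hz
  have h4x : (4 : ℝ) - x ≠ 0 := sub_ne_zero.mpr hx.symm
  have h4 : (4 - x) ^ 2 ≠ 0 ∧ (4 - x) ^ 1 ≠ 0 := ⟨pow_ne_zero _ h4x, pow_ne_zero _ h4x⟩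
  have hasc : (2).ascFactorial k = (k + 1)! := by
    simpa [add_comm] using factorial_mul_ascFactorial 1 k
  rw [hnhds.iteratedDeriv_eq, iteratedDeriv_const_add (Nat.pos_of_ne_zero hk),
    iteratedDeriv_fun_sub (by fun_prop (disch := exact h4.1)) (by fun_prop (disch := exact h4.2)),
    iteratedDeriv_const_mul_field, iteratedDeriv_const_mul_field,
    iteratedDeriv_inv_const_sub_pow, iteratedDeriv_inv_const_sub_pow, one_ascFactorial, hasc,
    factorial_succ]
  push_cast
  field_simp
  ring

lemma iteratedDeriv_psi222_nonneg (k : ℕ) {x : ℝ} (hx₁ : -4 ≤ x) (hx₂ : x < 4) :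
    0 ≤ iteratedDeriv k psi222 x := by
  rcases eq_or_ne k 0 with rfl | hk
  · exact div_nonneg (sq_nonneg _) (sq_nonneg _)
  · have hk₁ : (1 : ℝ) ≤ k := Nat.one_le_cast.mpr (Nat.pos_of_ne_zero hk)
    rw [iteratedDeriv_psi222 hk hx₂.ne]
    have : 0 < 4 - x := sub_pos.mpr hx₂
    have : 0 ≤ 4 * (k : ℝ) + x := by linarith
    positivity

/-- The function `ψ(z) = (1 + z/4)²/(1 - z/4)²` is absolutely monotonic on
`[-4, 0]` (all derivatives nonnegative there) and approximates the
exponential to order 2 at the origin: `ψ(0) = ψ'(0) = ψ''(0) = 1`. -/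
theorem psi_222_absolutely_monotonic :
    let ψ : ℝ → ℝ := fun z => (1 + z / 4) ^ 2 / (1 - z / 4) ^ 2
    (∀ (k : ℕ) (x : ℝ), -4 ≤ x → x ≤ 0 → 0 ≤ iteratedDeriv k ψ x) ∧
      ψ 0 = 1 ∧ deriv ψ 0 = 1 ∧ iteratedDeriv 2 ψ 0 = 1 := by
  intro ψ
  have hψ : ψ = psi222 := rfl
  rw [hψ, ← iteratedDeriv_one]
  refine ⟨fun k x hx₁ hx₂ => iteratedDeriv_psi222_nonneg k hx₁ (by linarith), by norm_num [psi222],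
    ?_, ?_⟩
  · rw [iteratedDeriv_psi222 one_ne_zero (by norm_num)]
    norm_num
  · rw [iteratedDeriv_psi222 two_ne_zero (by norm_num)]
    norm_num
end

section
/- Let a = (2-√2)/4 and ψ_a(z) = ((1/6)(-6a³+18a²-9a+1)z³ + (1/2)(6a²-6a+1)z² + (1-3a)z + 1)/(1-az)³. Then ψ_a(-2-√8) = 1 - 2√2/3 > 0, and for every integer k ≥ 1, ψ_a^{(k)}(-2-√8) = (4/3)·(3/2 - √2)^k · k!·(k-1)(k-2) ≥ 0. In particular ψ_a is absolutely monotonic at -2-2√2. -/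
/-!
In the variable `w = (1 - a z)⁻¹` the function `ψ_a` is a cubic polynomial, and
`dᵏ/dzᵏ wⁿ = n (n+1) ⋯ (n+k-1) aᵏ wⁿ⁺ᵏ`. For `a = (2 - √2)/4`, a root of
`8a² - 8a + 1 = 0`, the point `z = -2 - √8 = 8a - 6` gives `w = 4a` and
`a w = 4a² = 3/2 - √2`; reducing the coefficients modulo `8a² - 8a + 1` leaves `(k-1)(k-2)`
up to the factor `(4/3) (4a²)ᵏ k!`.
-/

open Set Filter Topology

theorem iteratedDeriv_eqOn_of_hasDerivAt {𝕜 F : Type*} [NontriviallyNormedField 𝕜]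
    [NormedAddCommGroup F] [NormedSpace 𝕜 F] {U : Set 𝕜} (hU : IsOpen U) {f : 𝕜 → F}
    {g : ℕ → 𝕜 → F} (hf : EqOn f (g 0) U)
    (hg : ∀ k, ∀ z ∈ U, HasDerivAt (g k) (g (k + 1) z) z) (k : ℕ) :
    EqOn (iteratedDeriv k f) (g k) U := by
  induction k with
  | zero => simpa using hf
  | succ k ih =>
    intro z hz
    rw [iteratedDeriv_succ, (eventuallyEq_of_mem (hU.mem_nhds hz) ih).deriv_eq]
    exact (hg k z hz).deriv

section InvOneSubMulPow

variable {𝕜 : Type*} [NontriviallyNormedField 𝕜]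

theorem hasDerivAt_inv_one_sub_mul_pow (a : 𝕜) (m : ℕ) {z : 𝕜} (hz : 1 - a * z ≠ 0) :
    HasDerivAt (fun z => (1 - a * z)⁻¹ ^ m) (m * a * (1 - a * z)⁻¹ ^ (m + 1)) z := by
  have hlin : HasDerivAt (fun z => 1 - a * z) (-a) z := by
    simpa using ((hasDerivAt_id z).const_mul a).const_sub 1
  have hinv : HasDerivAt (fun z => (1 - a * z)⁻¹) (a * (1 - a * z)⁻¹ ^ 2) z :=
    (hlin.inv hz).congr_deriv (by rw [neg_neg, div_eq_mul_inv, inv_pow])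
  rcases m with _ | n
  · simpa using hasDerivAt_const z (1 : 𝕜)
  · refine (hinv.fun_pow (n + 1)).congr_deriv ?_
    rw [Nat.add_sub_cancel]
    push_cast
    ring

theorem iteratedDeriv_sum_inv_one_sub_mul_pow {ι : Type*} (s : Finset ι) (c : ι → 𝕜)
    (e : ι → ℕ) (a : 𝕜) (k : ℕ) {z : 𝕜} (hz : 1 - a * z ≠ 0) :
    iteratedDeriv k (fun z => ∑ i ∈ s, c i * (1 - a * z)⁻¹ ^ e i) z =
      ∑ i ∈ s, c i * (e i).ascFactorial k * a ^ k * (1 - a * z)⁻¹ ^ (e i + k) := by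
  refine iteratedDeriv_eqOn_of_hasDerivAt (g := fun k z =>
      ∑ i ∈ s, c i * (e i).ascFactorial k * a ^ k * (1 - a * z)⁻¹ ^ (e i + k))
    (U := {z | 1 - a * z ≠ 0}) (isOpen_ne_fun (by fun_prop) (by fun_prop)) (fun z _ => by simp)
    ?_ k hz
  intro k z hz
  refine (HasDerivAt.fun_sum fun i _ =>
    (hasDerivAt_inv_one_sub_mul_pow a (e i + k) hz).const_mul
      (c i * (e i).ascFactorial k * a ^ k)).congr_deriv (Finset.sum_congr rfl fun i _ => ?_)
  push_cast [Nat.ascFactorial_succ]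
  ring

end InvOneSubMulPow

theorem Nat.cast_sub_one_mul_cast_sub_two_nonneg {R : Type*} [Ring R] [LinearOrder R]
    [IsStrictOrderedRing R] (k : ℕ) : 0 ≤ ((k : R) - 1) * ((k : R) - 2) := by
  rcases le_or_gt k 1 with hk | hk
  · have hk' : (k : R) ≤ 1 := by exact_mod_cast hk
    exact mul_nonneg_of_nonpos_of_nonpos (sub_nonpos.mpr hk')
      (sub_nonpos.mpr (hk'.trans one_le_two))
  · have hk' : (2 : R) ≤ k := by exact_mod_cast hk
    exact mul_nonneg (sub_nonneg.mpr (one_le_two.trans hk')) (sub_nonneg.mpr hk')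

noncomputable def psi333 (a z : ℝ) : ℝ :=
  ((1 / 6) * (-6 * a ^ 3 + 18 * a ^ 2 - 9 * a + 1) * z ^ 3 +
      (1 / 2) * (6 * a ^ 2 - 6 * a + 1) * z ^ 2 + (1 - 3 * a) * z + 1) / (1 - a * z) ^ 3

/-- Coefficients of `psi333 a` as a cubic in `(1 - a z)⁻¹`, reduced modulo `8a² - 8a + 1`. -/
noncomputable def psi333Coeff (a : ℝ) : Fin 4 → ℝ :=
  ![-3 + 8 / 3 * a, 16 - 16 * a, -28 + 32 * a, 16 - 56 / 3 * a]

section RootOfEightSqSubEightAddOne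

variable {a : ℝ} (ha : 8 * a ^ 2 - 8 * a + 1 = 0)
include ha

theorem psi333_eq_sum {z : ℝ} (hz : 1 - a * z ≠ 0) :
    psi333 a z = ∑ i : Fin 4, psi333Coeff a i * (1 - a * z)⁻¹ ^ (i : ℕ) := by
  simp only [psi333, psi333Coeff, Fin.sum_univ_four, Matrix.cons_val, Fin.isValue,
    Fin.coe_ofNat_eq_mod, Nat.reduceMod, pow_zero, pow_one]
  field_simp
  linear_combination
    (36 * z + 18 * z ^ 2 + 6 * z ^ 3 + 36 * a * z ^ 2 - 6 * a * z ^ 3 + 12 * a ^ 2 * z ^ 3) * ha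

theorem iteratedDeriv_psi333 (k : ℕ) {z : ℝ} (hz : 1 - a * z ≠ 0) :
    iteratedDeriv k (psi333 a) z = ∑ i : Fin 4,
      psi333Coeff a i * (i : ℕ).ascFactorial k * a ^ k * (1 - a * z)⁻¹ ^ ((i : ℕ) + k) := by
  have hsum : psi333 a =ᶠ[𝓝 z]
      fun z => ∑ i : Fin 4, psi333Coeff a i * (1 - a * z)⁻¹ ^ (i : ℕ) :=
    (isOpen_ne_fun (by fun_prop) (by fun_prop)).eventually_mem hz |>.mono
      fun _ hw => psi333_eq_sum ha hw
  rw [(hsum.iteratedDeriv k).eq_of_nhds]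
  exact iteratedDeriv_sum_inv_one_sub_mul_pow _ _ _ a k hz

theorem one_sub_mul_eight_mul_sub_six_mul : (1 - a * (8 * a - 6)) * (4 * a) = 1 := by
  linear_combination (-4 * a - 1) * ha

theorem psi333Coeff_mul_pow (i : Fin 4) :
    psi333Coeff a i * (4 * a) ^ (i : ℕ) = ![(8 * a - 9) / 3, 8, -8, 8 / 3] i := by
  fin_cases i <;> simp only [psi333Coeff, Fin.zero_eta, Fin.mk_one, Fin.reduceFinMk, Fin.isValue,
    Matrix.cons_val, Matrix.cons_val_zero, Matrix.cons_val_one, pow_zero, pow_one, mul_one]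
  · ring
  · linear_combination -8 * ha
  · linear_combination (64 * a + 8) * ha
  · linear_combination (-448 / 3 * a ^ 2 - 64 / 3 * a - 8 / 3) * ha

theorem iteratedDeriv_psi333_eight_mul_sub_six (k : ℕ) :
    iteratedDeriv k (psi333 a) (8 * a - 6) =
      (4 * a ^ 2) ^ k *
        ∑ i : Fin 4, ![(8 * a - 9) / 3, 8, -8, 8 / 3] i * (i : ℕ).ascFactorial k := by
  have hmul := one_sub_mul_eight_mul_sub_six_mul ha
  rw [iteratedDeriv_psi333 ha k (left_ne_zero_of_mul_eq_one hmul),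
    inv_eq_of_mul_eq_one_right hmul, Finset.mul_sum]
  refine Finset.sum_congr rfl fun i _ => ?_
  rw [← psi333Coeff_mul_pow ha]
  ring

theorem psi333_eight_mul_sub_six : psi333 a (8 * a - 6) = (8 * a - 1) / 3 := by
  have h := iteratedDeriv_psi333_eight_mul_sub_six ha 0
  simp only [iteratedDeriv_zero, pow_zero, one_mul, Nat.ascFactorial_zero, Nat.cast_one, mul_one,
    Fin.sum_univ_four, Fin.isValue, Matrix.cons_val, Matrix.cons_val_zero, Matrix.cons_val_one] at h
  linear_combination h

theorem iteratedDeriv_psi333_eight_mul_sub_six_of_pos {k : ℕ} (hk : 1 ≤ k) :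
    iteratedDeriv k (psi333 a) (8 * a - 6) =
      4 / 3 * (4 * a ^ 2) ^ k * k.factorial * ((k : ℝ) - 1) * ((k : ℝ) - 2) := by
  obtain ⟨m, rfl⟩ := Nat.exists_eq_add_of_le' hk
  have h2 : (2).ascFactorial (m + 1) = (m + 2) * (m + 1).factorial := by
    have h := Nat.factorial_mul_ascFactorial 1 (m + 1)
    rwa [Nat.factorial_one, one_mul, show 1 + (m + 1) = m + 1 + 1 by omega,
      Nat.factorial_succ] at h
  have h3 : (2 * (3).ascFactorial (m + 1) : ℝ) = (m + 3) * (m + 2) * (m + 1).factorial := by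
    have h := Nat.factorial_mul_ascFactorial 2 (m + 1)
    rw [Nat.factorial_two, show 2 + (m + 1) = m + 1 + 1 + 1 by omega, Nat.factorial_succ,
      Nat.factorial_succ] at h
    exact_mod_cast h.trans (by ring)
  rw [iteratedDeriv_psi333_eight_mul_sub_six ha]
  simp only [Fin.sum_univ_four, Fin.isValue, Matrix.cons_val, Matrix.cons_val_zero,
    Matrix.cons_val_one, Fin.coe_ofNat_eq_mod, Nat.reduceMod, Nat.zero_ascFactorial,
    Nat.one_ascFactorial, h2]
  push_cast
  linear_combination 4 / 3 * (4 * a ^ 2) ^ (m + 1) * h3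

theorem iteratedDeriv_psi333_eight_mul_sub_six_nonneg (k : ℕ) :
    0 ≤ iteratedDeriv k (psi333 a) (8 * a - 6) := by
  rcases Nat.eq_zero_or_pos k with rfl | hk
  · rw [iteratedDeriv_zero, psi333_eight_mul_sub_six ha]
    nlinarith [sq_nonneg a]
  · rw [iteratedDeriv_psi333_eight_mul_sub_six_of_pos ha hk, mul_assoc]
    exact mul_nonneg (by positivity) (Nat.cast_sub_one_mul_cast_sub_two_nonneg k)

end RootOfEightSqSubEightAddOne

/-- For `a = (2-√2)/4` and
`ψ_a(z) = ((1/6)(-6a³+18a²-9a+1)z³ + (1/2)(6a²-6a+1)z² + (1-3a)z + 1)/(1-az)³`: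
`ψ_a(-2-√8) = 1 - 2√2/3 > 0` and for every `k ≥ 1`,
`ψ_a^{(k)}(-2-√8) = (4/3)(3/2-√2)^k k! (k-1)(k-2) ≥ 0`; in particular `ψ_a`
is absolutely monotonic at `-2-2√2`. -/
theorem psi_333_at_optimal_point :
    let a : ℝ := (2 - Real.sqrt 2) / 4
    let ψ : ℝ → ℝ := fun z =>
      ((1 / 6) * (-6 * a ^ 3 + 18 * a ^ 2 - 9 * a + 1) * z ^ 3 +
          (1 / 2) * (6 * a ^ 2 - 6 * a + 1) * z ^ 2 + (1 - 3 * a) * z + 1) /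
        (1 - a * z) ^ 3
    (ψ (-2 - Real.sqrt 8) = 1 - 2 * Real.sqrt 2 / 3) ∧
    (0 < 1 - 2 * Real.sqrt 2 / 3) ∧
    (∀ k : ℕ, 1 ≤ k →
      iteratedDeriv k ψ (-2 - Real.sqrt 8) =
        (4 / 3) * (3 / 2 - Real.sqrt 2) ^ k * (k.factorial : ℝ) *
          ((k : ℝ) - 1) * ((k : ℝ) - 2)) ∧
    (∀ k : ℕ, 0 ≤ iteratedDeriv k ψ (-2 - Real.sqrt 8)) := by
  intro a ψ
  have hs : Real.sqrt 2 ^ 2 = 2 := Real.sq_sqrt zero_le_two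
  have ha : 8 * a ^ 2 - 8 * a + 1 = 0 := by linear_combination hs / 2
  have hx : -2 - Real.sqrt 8 = 8 * a - 6 := by
    rw [show (8 : ℝ) = 2 ^ 2 * 2 by norm_num, Real.sqrt_mul' _ zero_le_two,
      Real.sqrt_sq zero_le_two]
    ring
  have hr : 3 / 2 - Real.sqrt 2 = 4 * a ^ 2 := by linear_combination -hs / 4
  have hψ0 : 1 - 2 * Real.sqrt 2 / 3 = (8 * a - 1) / 3 := by ring
  have hψ : ψ = psi333 a := rfl
  refine ⟨?_, by nlinarith [Real.sqrt_nonneg 2], ?_, ?_⟩ <;> rw [hψ, hx]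
  · rw [hψ0, psi333_eight_mul_sub_six ha]
  · exact fun k hk => hr ▸ iteratedDeriv_psi333_eight_mul_sub_six_of_pos ha hk
  · exact iteratedDeriv_psi333_eight_mul_sub_six_nonneg ha
end

section
/- For s = 3: if a > 0 and c ∈ ℝ satisfy 108a² - 90a - 216c + 13 ≥ 0, 108a³ - 108a² + 42a + 108c - 5 ≥ 0, and a³ - 2a² + a/2 + c ≥ 0, then 0 < a ≤ 1/6 or a ≥ (5 + 2√3)/6. -/
/-- Elimination of the linear parameter `c` in the class `Π̂_{3/3,2}`: if
`a > 0` and `c ∈ ℝ` satisfy `108a² - 90a - 216c + 13 ≥ 0`,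
`108a³ - 108a² + 42a + 108c - 5 ≥ 0`, and `a³ - 2a² + a/2 + c ≥ 0`, then
`0 < a ≤ 1/6` or `a ≥ (5 + 2√3)/6`. -/
theorem a_range_pihat_3_3_2 (a c : ℝ) (ha : 0 < a)
    (h1 : 0 ≤ 108 * a ^ 2 - 90 * a - 216 * c + 13)
    (h2 : 0 ≤ 108 * a ^ 3 - 108 * a ^ 2 + 42 * a + 108 * c - 5)
    (h3 : 0 ≤ a ^ 3 - 2 * a ^ 2 + a / 2 + c) :
    (0 < a ∧ a ≤ 1 / 6) ∨ (5 + 2 * Real.sqrt 3) / 6 ≤ a := by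
  have hA : 0 ≤ (6 * a - 1) * ((2 * a - 1) * (6 * a + 1)) := by nlinarith [h1, h2]
  have hB : 0 ≤ (6 * a + 1) * (36 * a ^ 2 - 60 * a + 13) := by nlinarith [h1, h3]
  rcases le_or_gt a (1 / 6) with h | h
  · exact Or.inl ⟨ha, h⟩
  · right
    have ha2 : (1 : ℝ) / 2 ≤ a := by nlinarith [hA]
    have hq : 0 ≤ 36 * a ^ 2 - 60 * a + 13 := by nlinarith [hB]
    have hs : Real.sqrt 3 ^ 2 = 3 := Real.sq_sqrt (by norm_num)
    have hs0 : (0 : ℝ) ≤ Real.sqrt 3 := Real.sqrt_nonneg 3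
    nlinarith [hq, ha2, hs, hs0, sq_nonneg (6 * a - 5 - 2 * Real.sqrt 3),
      sq_nonneg (6 * a - 5 + 2 * Real.sqrt 3)]
end

section
/- For every real a ≥ (5 + 2√3)/6 and every real c satisfying (-2a³ + 4a² - a)/2 ≤ c ≤ (108a² - 90a + 13)/216, there exists an integer k ≥ 3 such that λ(k,a,c) < 0, where λ(k,a,c) = k²(a³ - 2a² + a/2 + c) + k(-36a⁴ + 57a³ - 8a² - 36ac - a/2 - 3c) + 36ac + 2c + 216a⁵ - 180a⁴ + 26a³ + 216a²c. -/
/-- A linear function with negative slope is eventually negative at integers `≥ 3`. -/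
lemma lin_neg_aux (B C : ℝ) (hB : B < 0) : ∃ k : ℕ, 3 ≤ k ∧ B * k + C < 0 := by
  refine ⟨max 3 ⌈(C + 1) / (-B)⌉₊, le_max_left _ _, ?_⟩
  have hBpos : 0 < -B := by linarith
  have hx : (C + 1) / (-B) ≤ ((max 3 ⌈(C + 1) / (-B)⌉₊ : ℕ) : ℝ) := by
    calc (C + 1) / (-B) ≤ (⌈(C + 1) / (-B)⌉₊ : ℝ) := Nat.le_ceil _
      _ ≤ _ := by exact_mod_cast le_max_right 3 ⌈(C + 1) / (-B)⌉₊
  have h := (div_le_iff₀ hBpos).mp hx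
  linarith

/-- A quadratic with positive leading coefficient, nonpositive "shifted discriminant"
condition and vertex beyond 3 is negative at some integer `≥ 3`. -/
lemma quad_neg_aux (A B C : ℝ) (hA : 0 < A) (hkey : 4 * A * (C + A) ≤ B ^ 2)
    (h6 : 6 * A < -B) : ∃ k : ℕ, 3 ≤ k ∧ A * k ^ 2 + B * k + C < 0 := by
  have h2A : 0 < 2 * A := by linarith
  set k0 : ℝ := -B / (2 * A) with hk0
  have hk0def : 2 * A * k0 = -B := by
    rw [hk0]; field_simp
  have hk03 : 3 < k0 := by
    rw [hk0, lt_div_iff₀ h2A]; linarith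
  refine ⟨⌈k0⌉₊, ?_, ?_⟩
  · have h2 : (2 : ℕ) < ⌈k0⌉₊ := Nat.lt_ceil.mpr (by push_cast; linarith)
    omega
  · have hlb : k0 ≤ (⌈k0⌉₊ : ℝ) := Nat.le_ceil _
    have hub : ((⌈k0⌉₊ : ℕ) : ℝ) < k0 + 1 := Nat.ceil_lt_add_one (by linarith)
    set x : ℝ := ((⌈k0⌉₊ : ℕ) : ℝ) with hxdef
    have h1 : 0 ≤ 2 * A * x + B := by
      have := mul_le_mul_of_nonneg_left hlb h2A.le
      linarith
    have h2 : 2 * A * x + B < 2 * A := by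
      have := mul_lt_mul_of_pos_left hub h2A
      linarith
    have hsq : (2 * A * x + B) ^ 2 < 4 * A ^ 2 := by nlinarith
    nlinarith [hsq, hkey, hA, mul_pos hA hA]

set_option maxHeartbeats 1000000 in
/-- Exclusion of large parameters in `Π̂_{3/3,2}`: for every
`a ≥ (5 + 2√3)/6` and every `c` with
`(-2a³ + 4a² - a)/2 ≤ c ≤ (108a² - 90a + 13)/216`, there is an integer
`k ≥ 3` with `λ(k,a,c) < 0`, where `λ(k,a,c)` is the quadratic-in-`k`
expression coming from `ψ_{a,c}^{(k)}(-6)`. -/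
theorem exists_k_lambda_neg (a c : ℝ)
    (ha : (5 + 2 * Real.sqrt 3) / 6 ≤ a)
    (hc1 : (-2 * a ^ 3 + 4 * a ^ 2 - a) / 2 ≤ c)
    (hc2 : c ≤ (108 * a ^ 2 - 90 * a + 13) / 216) :
    ∃ k : ℕ, 3 ≤ k ∧
      (k : ℝ) ^ 2 * (a ^ 3 - 2 * a ^ 2 + a / 2 + c) +
        (k : ℝ) * (-36 * a ^ 4 + 57 * a ^ 3 - 8 * a ^ 2 - 36 * a * c -
          a / 2 - 3 * c) +
        36 * a * c + 2 * c + 216 * a ^ 5 - 180 * a ^ 4 + 26 * a ^ 3 +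
          216 * a ^ 2 * c < 0 := by
  have hsqrt : (17 : ℝ) / 10 ≤ Real.sqrt 3 := by
    nlinarith [Real.sq_sqrt (show (0:ℝ) ≤ 3 by norm_num), Real.sqrt_nonneg 3]
  have ha' : (7 : ℝ) / 5 ≤ a := by linarith
  have ht : (0 : ℝ) ≤ a - 7 / 5 := by linarith
  have hA : 0 ≤ a ^ 3 - 2 * a ^ 2 + a / 2 + c := by linarith
  -- B < 0
  have hB : -36 * a ^ 4 + 57 * a ^ 3 - 8 * a ^ 2 - 36 * a * c - a / 2 - 3 * c < 0 := by
    nlinarith [mul_nonneg (show (0:ℝ) ≤ 36 * a + 3 by linarith)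
        (show (0:ℝ) ≤ c - (-a ^ 3 + 2 * a ^ 2 - a / 2) by linarith),
      mul_nonneg (mul_nonneg ht ht) ht, mul_nonneg ht ht,
      mul_nonneg (mul_nonneg ht ht) (show (0:ℝ) ≤ a by linarith)]
  rcases hA.eq_or_lt with h0 | hApos
  · -- A = 0 : linear case
    obtain ⟨k, hk3, hkneg⟩ := lin_neg_aux
      (-36 * a ^ 4 + 57 * a ^ 3 - 8 * a ^ 2 - 36 * a * c - a / 2 - 3 * c)
      (36 * a * c + 2 * c + 216 * a ^ 5 - 180 * a ^ 4 + 26 * a ^ 3 + 216 * a ^ 2 * c) hB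
    refine ⟨k, hk3, ?_⟩
    have hA0 : a ^ 3 - 2 * a ^ 2 + a / 2 + c = 0 := h0.symm
    calc (k : ℝ) ^ 2 * (a ^ 3 - 2 * a ^ 2 + a / 2 + c) +
        (k : ℝ) * (-36 * a ^ 4 + 57 * a ^ 3 - 8 * a ^ 2 - 36 * a * c - a / 2 - 3 * c) +
        36 * a * c + 2 * c + 216 * a ^ 5 - 180 * a ^ 4 + 26 * a ^ 3 + 216 * a ^ 2 * c
        = (k : ℝ) ^ 2 * (a ^ 3 - 2 * a ^ 2 + a / 2 + c) +
          ((-36 * a ^ 4 + 57 * a ^ 3 - 8 * a ^ 2 - 36 * a * c - a / 2 - 3 * c) * k +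
           (36 * a * c + 2 * c + 216 * a ^ 5 - 180 * a ^ 4 + 26 * a ^ 3 + 216 * a ^ 2 * c)) := by
          ring
      _ < 0 := by rw [hA0]; linarith
  · -- A > 0 : quadratic case
    -- vertex beyond 3 : B + 6A < 0
    have h6 : (-36 * a ^ 4 + 57 * a ^ 3 - 8 * a ^ 2 - 36 * a * c - a / 2 - 3 * c) +
        6 * (a ^ 3 - 2 * a ^ 2 + a / 2 + c) < 0 := by
      nlinarith [mul_nonneg (show (0:ℝ) ≤ 36 * a - 3 by linarith)
          (show (0:ℝ) ≤ c - (-a ^ 3 + 2 * a ^ 2 - a / 2) by linarith),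
        mul_nonneg (mul_nonneg ht ht) ht, mul_nonneg ht ht,
        mul_nonneg (mul_nonneg ht ht) (show (0:ℝ) ≤ a by linarith)]
    -- positivity of the negated discriminant (in c) of B² - 4A(C+A)
    have hP : 0 < 248832 * a ^ 8 - 124416 * a ^ 7 - 71424 * a ^ 6 - 768 * a ^ 5 +
        1856 * a ^ 4 + 32 * a ^ 3 - 16 * a ^ 2 := by
      nlinarith [pow_nonneg ht 1, pow_nonneg ht 2, pow_nonneg ht 3, pow_nonneg ht 4,
        pow_nonneg ht 5, pow_nonneg ht 6, pow_nonneg ht 7, pow_nonneg ht 8]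
    have hqa : (0 : ℝ) < 432 * a ^ 2 + 72 * a - 3 := by nlinarith
    have hkey : 4 * (a ^ 3 - 2 * a ^ 2 + a / 2 + c) *
        ((36 * a * c + 2 * c + 216 * a ^ 5 - 180 * a ^ 4 + 26 * a ^ 3 + 216 * a ^ 2 * c) +
          (a ^ 3 - 2 * a ^ 2 + a / 2 + c)) ≤
        (-36 * a ^ 4 + 57 * a ^ 3 - 8 * a ^ 2 - 36 * a * c - a / 2 - 3 * c) ^ 2 := by
      have hid : (432 * a ^ 2 + 72 * a - 3) *
          (4 * ((-36 * a ^ 4 + 57 * a ^ 3 - 8 * a ^ 2 - 36 * a * c - a / 2 - 3 * c) ^ 2 -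
            4 * (a ^ 3 - 2 * a ^ 2 + a / 2 + c) *
              ((36 * a * c + 2 * c + 216 * a ^ 5 - 180 * a ^ 4 + 26 * a ^ 3 + 216 * a ^ 2 * c) +
                (a ^ 3 - 2 * a ^ 2 + a / 2 + c)))) =
          (2 * (432 * a ^ 2 + 72 * a - 3) * (a ^ 3 + c) +
            (-1728 * a ^ 4 - 24 * a ^ 3 + 44 * a ^ 2 - 5 * a)) ^ 2 +
          (248832 * a ^ 8 - 124416 * a ^ 7 - 71424 * a ^ 6 - 768 * a ^ 5 +
            1856 * a ^ 4 + 32 * a ^ 3 - 16 * a ^ 2) := by ring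
      have h4 : 0 < (432 * a ^ 2 + 72 * a - 3) *
          (4 * ((-36 * a ^ 4 + 57 * a ^ 3 - 8 * a ^ 2 - 36 * a * c - a / 2 - 3 * c) ^ 2 -
            4 * (a ^ 3 - 2 * a ^ 2 + a / 2 + c) *
              ((36 * a * c + 2 * c + 216 * a ^ 5 - 180 * a ^ 4 + 26 * a ^ 3 + 216 * a ^ 2 * c) +
                (a ^ 3 - 2 * a ^ 2 + a / 2 + c)))) := by
        rw [hid]
        have := sq_nonneg (2 * (432 * a ^ 2 + 72 * a - 3) * (a ^ 3 + c) +
            (-1728 * a ^ 4 - 24 * a ^ 3 + 44 * a ^ 2 - 5 * a))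
        linarith
      rcases mul_pos_iff.mp h4 with ⟨_, h5⟩ | ⟨h5, _⟩
      · linarith
      · linarith
    obtain ⟨k, hk3, hkneg⟩ := quad_neg_aux
      (a ^ 3 - 2 * a ^ 2 + a / 2 + c)
      (-36 * a ^ 4 + 57 * a ^ 3 - 8 * a ^ 2 - 36 * a * c - a / 2 - 3 * c)
      (36 * a * c + 2 * c + 216 * a ^ 5 - 180 * a ^ 4 + 26 * a ^ 3 + 216 * a ^ 2 * c)
      hApos hkey (by linarith)
    refine ⟨k, hk3, ?_⟩
    calc (k : ℝ) ^ 2 * (a ^ 3 - 2 * a ^ 2 + a / 2 + c) +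
        (k : ℝ) * (-36 * a ^ 4 + 57 * a ^ 3 - 8 * a ^ 2 - 36 * a * c - a / 2 - 3 * c) +
        36 * a * c + 2 * c + 216 * a ^ 5 - 180 * a ^ 4 + 26 * a ^ 3 + 216 * a ^ 2 * c
        = (a ^ 3 - 2 * a ^ 2 + a / 2 + c) * (k : ℝ) ^ 2 +
          (-36 * a ^ 4 + 57 * a ^ 3 - 8 * a ^ 2 - 36 * a * c - a / 2 - 3 * c) * (k : ℝ) +
          (36 * a * c + 2 * c + 216 * a ^ 5 - 180 * a ^ 4 + 26 * a ^ 3 + 216 * a ^ 2 * c) := by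
          ring
      _ < 0 := hkneg
end
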